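/- Let E, V, C be finite sets, head, tail : E → V with head e ≠ tail e for all e, D : Matrix E V ℝ the oriented incidence matrix, a : V → C an aggregate assignment, and P : Matrix V C ℝ the piecewise-constant prolongator. Define Z = Pᵀ · Dᵀ · D · P. Then for any two distinct aggregates i ≠ j, Z i j = −(the number of edges e ∈ E with {a (head e), a (tail e)} = {i, j}). In particular, the off-diagonal entry Z_{ij} is nonzero if and only if some fine edge has one endpoint in aggregate i and the other endpoint in aggregate j, so the Reitzinger–Schöberl construction creates coarse edges exactly between adjacent aggregates. -/
import Mathlib


open Matrix

/-- Off-diagonal entries of the Reitzinger–Schöberl projected Poisson operator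
`Z = Pᵀ Dᵀ D P`: for distinct aggregates `i ≠ j`, `Z i j` equals minus the
number of fine edges with one endpoint in aggregate `i` and the other in `j`;
in particular `Z i j ≠ 0` iff the aggregates `i` and `j` are adjacent. -/
theorem projected_poisson_offdiagonal
    {E V C : Type*} [Fintype E] [Fintype V] [Fintype C]
    [DecidableEq V] [DecidableEq C]
    (head tail : E → V) (hht : ∀ e : E, head e ≠ tail e)
    (D : Matrix E V ℝ)
    (hD : ∀ e v, D e v =
      if v = head e then 1 else if v = tail e then -1 else 0)
    (a : V → C)
    (P : Matrix V C ℝ)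
    (hP : ∀ v j, P v j = if a v = j then 1 else 0) :
    ∀ i j : C, i ≠ j →
      (Pᵀ * Dᵀ * D * P) i j =
        -((Finset.univ.filter
            (fun e : E => ({a (head e), a (tail e)} : Finset C) = {i, j})).card : ℝ) ∧
      ((Pᵀ * Dᵀ * D * P) i j ≠ 0 ↔
        ∃ e : E, (a (head e) = i ∧ a (tail e) = j) ∨
          (a (head e) = j ∧ a (tail e) = i) ) := by
  intro i j hij
  have hDP : ∀ e c, (D * P) e c =
      (if a (head e) = c then (1:ℝ) else 0) - (if a (tail e) = c then 1 else 0) := by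
    intro e c
    rw [mul_apply]
    have hterm : ∀ v, D e v * P v c =
        (if v = head e then (if a (head e) = c then (1:ℝ) else 0) else 0) +
        (if v = tail e then -(if a (tail e) = c then (1:ℝ) else 0) else 0) := by
      intro v
      rw [hD, hP]
      by_cases h1 : v = head e
      · subst h1
        simp [(hht e)]
      · by_cases h2 : v = tail e
        · subst h2
          simp only [if_neg h1]
          split_ifs <;> norm_num
        · simp [h1, h2]
    rw [Finset.sum_congr rfl (fun v _ => hterm v)]
    rw [Finset.sum_add_distrib, Finset.sum_ite_eq', Finset.sum_ite_eq']
    simp [sub_eq_add_neg]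
  have hZ : Pᵀ * Dᵀ * D * P = (D * P)ᵀ * (D * P) := by
    rw [transpose_mul, Matrix.mul_assoc]
  have hpred : ∀ e : E, (({a (head e), a (tail e)} : Finset C) = {i, j}) ↔
      ((a (head e) = i ∧ a (tail e) = j) ∨ (a (head e) = j ∧ a (tail e) = i)) := by
    intro e
    rw [← Finset.coe_inj]
    simp only [Finset.coe_insert, Finset.coe_singleton]
    exact Set.pair_eq_pair_iff
  have hentry : (Pᵀ * Dᵀ * D * P) i j =
      ∑ e : E, (if (a (head e) = i ∧ a (tail e) = j) ∨ (a (head e) = j ∧ a (tail e) = i)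
        then (-1:ℝ) else 0) := by
    rw [hZ, mul_apply]
    refine Finset.sum_congr rfl fun e _ => ?_
    rw [transpose_apply, hDP, hDP]
    split_ifs with h1 h2 h3 h4 h5 <;> simp_all <;> ring
  have hcard : (Pᵀ * Dᵀ * D * P) i j =
      -((Finset.univ.filter
          (fun e : E => ({a (head e), a (tail e)} : Finset C) = {i, j})).card : ℝ) := by
    rw [hentry, ← Finset.sum_filter]
    rw [Finset.sum_const]
    have : (Finset.univ.filter (fun e : E =>
        (a (head e) = i ∧ a (tail e) = j) ∨ (a (head e) = j ∧ a (tail e) = i))) =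
        (Finset.univ.filter
          (fun e : E => ({a (head e), a (tail e)} : Finset C) = {i, j})) := by
      apply Finset.filter_congr
      intro e _
      simp [hpred e]
    rw [this]
    simp
  refine ⟨hcard, ?_⟩
  rw [hcard]
  simp only [ne_eq, neg_eq_zero, Nat.cast_eq_zero, Finset.card_eq_zero,
    ← Finset.not_nonempty_iff_eq_empty, not_not, Finset.filter_nonempty_iff]
  simp [hpred]
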